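/- Let σ(x) = 1/(1+e^{-x}) be the sigmoid function, let α ∈ ℝ, let τ > 0, and let U be uniformly distributed on (0,1). Define G(α,τ) = σ((α + log U − log(1−U))/τ). Then for every ε ∈ (0,1), P(G(α,τ) ≥ 1−ε) = σ(α − τ·log(1/ε − 1)). -/

import Mathlib

/-!
The logit `log (u / (1 - u))` inverts σ on `(0, 1)`, and `log U - log (1 - U)` is the logit of `U`.
Since σ is increasing, the event `G(α,τ) ≥ p` is `α + logit U ≥ τ · logit p`, i.e.
`U ≥ σ(τ · logit p - α)`, an interval of length `1 - σ(τ · logit p - α) = σ(α - τ · logit p)`.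
-/

open MeasureTheory Real

/-- The sigmoid function σ(x) = 1/(1+e^{-x}). -/
noncomputable def gsigmoid (x : ℝ) : ℝ := 1 / (1 + Real.exp (-x))

theorem gsigmoid_eq_sigmoid : gsigmoid = sigmoid := by
  ext x
  rw [gsigmoid, sigmoid_def, one_div]

noncomputable def logit (p : ℝ) : ℝ := log (p / (1 - p))

section Logit

variable {p : ℝ}

theorem logit_eq_log_sub_log (hp0 : 0 < p) (hp1 : p < 1) : logit p = log p - log (1 - p) :=
  log_div hp0.ne' (sub_pos.2 hp1).ne'

theorem logit_one_sub (hp0 : 0 < p) : logit (1 - p) = log (1 / p - 1) := by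
  rw [logit, sub_sub_cancel, div_sub_one hp0.ne']

theorem sigmoid_logit (hp0 : 0 < p) (hp1 : p < 1) : sigmoid (logit p) = p := by
  have h1p : 0 < 1 - p := sub_pos.2 hp1
  rw [sigmoid_def, logit, exp_neg, exp_log (div_pos hp0 h1p)]
  field_simp
  ring

theorem le_sigmoid_iff_logit_le (hp0 : 0 < p) (hp1 : p < 1) {x : ℝ} :
    p ≤ sigmoid x ↔ logit p ≤ x := by
  conv_lhs => rw [← sigmoid_logit hp0 hp1]
  exact sigmoid_le_iff

theorem sigmoid_le_iff_le_logit (hp0 : 0 < p) (hp1 : p < 1) {x : ℝ} :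
    sigmoid x ≤ p ↔ x ≤ logit p := by
  conv_lhs => rw [← sigmoid_logit hp0 hp1]
  exact sigmoid_le_iff

end Logit

theorem le_sigmoid_logit_div_iff {α τ p u : ℝ} (hτ : 0 < τ) (hp0 : 0 < p) (hp1 : p < 1)
    (hu0 : 0 < u) (hu1 : u < 1) :
    p ≤ sigmoid ((α + logit u) / τ) ↔ sigmoid (τ * logit p - α) ≤ u := by
  rw [le_sigmoid_iff_logit_le hp0 hp1, le_div_iff₀ hτ, sigmoid_le_iff_le_logit hu0 hu1, mul_comm,
    sub_le_iff_le_add']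

theorem restrict_Ioo_volume_le_sigmoid_logit_div {α τ p : ℝ} (hτ : 0 < τ) (hp0 : 0 < p) (hp1 : p < 1) :
    volume.restrict (Set.Ioo (0:ℝ) 1) {u | p ≤ sigmoid ((α + logit u) / τ)}
      = ENNReal.ofReal (sigmoid (α - τ * logit p)) := by
  have hevent : {u | p ≤ sigmoid ((α + logit u) / τ)} ∩ Set.Ioo 0 1
      = Set.Ico (sigmoid (τ * logit p - α)) 1 := by
    ext u
    simp only [Set.mem_inter_iff, Set.mem_ofPred_eq, Set.mem_Ioo, Set.mem_Ico]
    constructor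
    · rintro ⟨hle, hu0, hu1⟩
      exact ⟨(le_sigmoid_logit_div_iff hτ hp0 hp1 hu0 hu1).1 hle, hu1⟩
    · rintro ⟨hle, hu1⟩
      have hu0 := (sigmoid_pos _).trans_le hle
      exact ⟨(le_sigmoid_logit_div_iff hτ hp0 hp1 hu0 hu1).2 hle, hu0, hu1⟩
  rw [Measure.restrict_apply' measurableSet_Ioo, hevent, volume_Ico, ← sigmoid_neg, neg_sub]

/-- For U uniform on (0,1) and G(α,τ) = σ((α + log U − log(1−U))/τ),
    for every ε ∈ (0,1), P(G(α,τ) ≥ 1−ε) = σ(α − τ·log(1/ε − 1)). -/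
theorem gumbel_upper_tail_eq (α τ ε : ℝ) (hτ : 0 < τ) (hε : ε ∈ Set.Ioo (0:ℝ) 1) :
    (volume.restrict (Set.Ioo (0:ℝ) 1))
      {u : ℝ | 1 - ε ≤ gsigmoid ((α + Real.log u - Real.log (1 - u)) / τ)}
      = ENNReal.ofReal (gsigmoid (α - τ * Real.log (1/ε - 1))) := by
  obtain ⟨hε0, hε1⟩ := hε
  have hevent : {u : ℝ | 1 - ε ≤ gsigmoid ((α + log u - log (1 - u)) / τ)} ∩ Set.Ioo 0 1
      = {u | 1 - ε ≤ sigmoid ((α + logit u) / τ)} ∩ Set.Ioo 0 1 := by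
    ext u
    simp only [Set.mem_inter_iff, Set.mem_ofPred_eq, Set.mem_Ioo, gsigmoid_eq_sigmoid]
    exact and_congr_left fun ⟨hu0, hu1⟩ => by rw [logit_eq_log_sub_log hu0 hu1, add_sub_assoc]
  rw [Measure.restrict_apply' measurableSet_Ioo, hevent, ← Measure.restrict_apply' measurableSet_Ioo,
    restrict_Ioo_volume_le_sigmoid_logit_div hτ (by linarith) (by linarith), logit_one_sub hε0, gsigmoid_eq_sigmoid]
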